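/- For constants β₁ > 0 and β₂ ≥ 0, the integral ∫_0^∞ x·exp(−β₁ y⁴ x⁴ − β₂ x²) dx equals (√π/(4y²√β₁)) · exp(β₂²/(4β₁y⁴)) · erfc(β₂/(2√β₁ y²)) for any y > 0, where erfc is the complementary error function. -/
import Mathlib
set_option maxHeartbeats 1000000


open MeasureTheory Real Set

/-- The complementary error function erfc(z) = (2/√π)∫_z^∞ e^{−t²} dt. -/
noncomputable def erfc (z : ℝ) : ℝ :=
  2 / Real.sqrt π * ∫ t in Set.Ioi z, Real.exp (-t ^ 2)

private lemma integrable_aux {a b : ℝ} (ha : 0 < a) (hb : 0 ≤ b) :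
    IntegrableOn (fun x => x * Real.exp (-(a * x ^ 4) - b * x ^ 2)) (Ioi 0) := by
  have h := integrableOn_rpow_mul_exp_neg_mul_rpow (p := 4) (s := 1) (by norm_num) (by norm_num) ha
  refine Integrable.mono h ?_ ?_
  · exact (continuous_id.mul (by fun_prop)).aestronglyMeasurable.restrict
  · filter_upwards [ae_restrict_mem measurableSet_Ioi] with x hx
    have hx0 : (0:ℝ) < x := hx
    rw [Real.norm_eq_abs, abs_mul, abs_of_pos hx0, abs_exp,
      Real.norm_eq_abs, abs_mul, abs_of_pos (Real.rpow_pos_of_pos hx0 1), abs_exp,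
      Real.rpow_one, show (4:ℝ) = ((4:ℕ):ℝ) by norm_num, Real.rpow_natCast]
    gcongr
    nlinarith [mul_nonneg hb (sq_nonneg x)]

/-- For β₁ > 0, β₂ ≥ 0 and y > 0,
∫_0^∞ x·exp(−β₁y⁴x⁴ − β₂x²) dx
  = (√π/(4y²√β₁))·exp(β₂²/(4β₁y⁴))·erfc(β₂/(2√β₁y²)). -/
theorem stmt11 (β₁ β₂ y : ℝ) (h₁ : 0 < β₁) (h₂ : 0 ≤ β₂) (hy : 0 < y) :
    (∫ x in Ioi (0 : ℝ), x * Real.exp (-(β₁ * y ^ 4 * x ^ 4) - β₂ * x ^ 2))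
      = Real.sqrt π / (4 * y ^ 2 * Real.sqrt β₁) *
          Real.exp (β₂ ^ 2 / (4 * β₁ * y ^ 4)) *
          erfc (β₂ / (2 * Real.sqrt β₁ * y ^ 2)) := by
  set a := β₁ * y ^ 4 with ha_def
  have ha : 0 < a := by positivity
  set sa := Real.sqrt a with hsa_def
  have hsa : 0 < sa := Real.sqrt_pos.mpr ha
  have hsa2 : sa ^ 2 = a := Real.sq_sqrt ha.le
  have hsa_eq : sa = Real.sqrt β₁ * y ^ 2 := by
    rw [hsa_def, ha_def, Real.sqrt_mul h₁.le, show y ^ 4 = (y ^ 2) ^ 2 by ring,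
      Real.sqrt_sq (sq_nonneg y)]
  set c := β₂ / (2 * sa) with hc_def
  set B := β₂ ^ 2 / (4 * a) with hB_def
  have h1 : sa * c = β₂ / 2 := by rw [hc_def]; field_simp
  have h2 : c ^ 2 = B := by rw [hc_def, hB_def, div_pow, mul_pow, hsa2]; norm_num
  set f : ℝ → ℝ := fun x => sa * x ^ 2 + c with hf_def
  set g : ℝ → ℝ := fun t => Real.exp B * Real.exp (-t ^ 2) with hg_def
  have hexp : ∀ x : ℝ, g (f x) * (2 * sa * x) =
      2 * sa * (x * Real.exp (-(a * x ^ 4) - β₂ * x ^ 2)) := by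
    intro x
    have : Real.exp B * Real.exp (-(sa * x ^ 2 + c) ^ 2)
        = Real.exp (-(a * x ^ 4) - β₂ * x ^ 2) := by
      rw [← Real.exp_add]
      congr 1
      linear_combination (-x^4) * hsa2 + (-2*x^2) * h1 + (-1) * h2
    simp only [hg_def, hf_def, this]; ring
  have hint : IntegrableOn (fun x => x * Real.exp (-(a * x ^ 4) - β₂ * x ^ 2)) (Ioi 0) :=
    integrable_aux ha h₂
  have key : (∫ x in Ioi (0:ℝ), (g ∘ f) x * (2 * sa * x)) = ∫ t in Ioi (f 0), g t := by
    refine integral_comp_mul_deriv_Ioi (f' := fun x => 2 * sa * x) ?_ ?_ ?_ ?_ ?_ ?_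
    · exact Continuous.continuousOn (by fun_prop)
    · exact ((Filter.tendsto_pow_atTop (two_ne_zero)).const_mul_atTop hsa).atTop_add
        tendsto_const_nhds
    · intro x hx
      have h : HasDerivAt f (sa * (2 * x ^ 1)) x :=
        ((hasDerivAt_pow 2 x).const_mul sa).add_const c
      have h' : HasDerivAt f (2 * sa * x) x := by convert h using 1; ring
      exact h'.hasDerivWithinAt
    · exact Continuous.continuousOn (by fun_prop)
    · have h : Integrable (fun t : ℝ => Real.exp B * Real.exp (-t ^ 2)) := by
        have := (integrable_exp_neg_mul_sq (b := 1) one_pos).const_mul (Real.exp B)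
        simpa using this
      exact h.integrableOn
    · rw [integrableOn_Ici_iff_integrableOn_Ioi]
      have h : IntegrableOn (fun x => 2 * sa * (x * Real.exp (-(a * x ^ 4) - β₂ * x ^ 2)))
          (Ioi 0) := hint.const_mul _
      exact h.congr_fun (fun x _ => (hexp x).symm) measurableSet_Ioi
  have hfun : (fun x => (g ∘ f) x * (2 * sa * x))
      = fun x => 2 * sa * (x * Real.exp (-(a * x ^ 4) - β₂ * x ^ 2)) :=
    funext fun x => hexp x
  rw [hfun, integral_const_mul] at key
  have hf0 : f 0 = c := by simp [hf_def]
  have herfc : (∫ t in Ioi c, Real.exp (-t ^ 2)) = Real.sqrt π / 2 * erfc c := by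
    rw [erfc]
    have hπ : Real.sqrt π ≠ 0 := (Real.sqrt_pos.mpr Real.pi_pos).ne'
    field_simp
  have hR : (∫ t in Ioi (f 0), g t) = Real.exp B * (Real.sqrt π / 2 * erfc c) := by
    rw [hf0, hg_def, integral_const_mul, herfc]
  rw [hR] at key
  have hI : (∫ x in Ioi (0:ℝ), x * Real.exp (-(a * x ^ 4) - β₂ * x ^ 2))
      = Real.sqrt π / (4 * sa) * Real.exp B * erfc c := by
    rw [div_mul_eq_mul_div, div_mul_eq_mul_div, eq_div_iff (by positivity : (4:ℝ) * sa ≠ 0)]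
    linear_combination 2 * key
  have hc_eq : c = β₂ / (2 * Real.sqrt β₁ * y ^ 2) := by
    rw [hc_def, hsa_eq]; ring_nf
  have hB_eq : B = β₂ ^ 2 / (4 * β₁ * y ^ 4) := by rw [hB_def, ha_def]; ring_nf
  rw [hI, hc_eq, hB_eq, hsa_eq]
  ring_nf
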